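/- arXiv:2310.08048 — 3 statements merged into one kernel-verified Lean document; each statement's English description precedes it below -/
import Mathlib

section
/- Let φ: ℂⁿ → ℝ be smooth and fix an index i. Then for every f ∈ C_c^∞(ℂⁿ): if ∂²φ/∂zⁱ∂\bar{z}ⁱ(z) < −c < 0 for all z ∈ ℂⁿ, then ∫_{ℂⁿ} |∂f/∂\bar{z}ⁱ + (∂φ/∂\bar{z}ⁱ) f|² dm ≥ −2∫_{ℂⁿ} |f|² ∂²φ/∂zⁱ∂\bar{z}ⁱ dm; and if ∂²φ/∂zⁱ∂\bar{z}ⁱ(z) > c > 0 for all z ∈ ℂⁿ, then ∫_{ℂⁿ} |−∂f/∂zⁱ + (∂φ/∂zⁱ) f|² dm ≥ 2∫_{ℂⁿ} |f|² ∂²φ/∂zⁱ∂\bar{z}ⁱ dm. Consequently, under the respective hypothesis, each integral is bounded below by 2c‖f‖²_{L²}. -/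
open MeasureTheory

/-- The Wirtinger derivative `∂/∂zⁱ`. -/
noncomputable def wD {n : ℕ} (i : Fin n) (f : (Fin n → ℂ) → ℂ) (z : Fin n → ℂ) : ℂ :=
  (1 / 2) * (fderiv ℝ f z (Pi.single i 1) - Complex.I * fderiv ℝ f z (Pi.single i Complex.I))

/-- The Wirtinger derivative `∂/∂z̄ⁱ`. -/
noncomputable def wDb {n : ℕ} (i : Fin n) (f : (Fin n → ℂ) → ℂ) (z : Fin n → ℂ) : ℂ :=
  (1 / 2) * (fderiv ℝ f z (Pi.single i 1) + Complex.I * fderiv ℝ f z (Pi.single i Complex.I))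

section Aux

variable {n : ℕ} (i : Fin n)

lemma contDiff_wD (u : (Fin n → ℂ) → ℂ) (hu : ContDiff ℝ (⊤:ℕ∞) u) :
    ContDiff ℝ (⊤:ℕ∞) (wD i u) := by
  have h : ContDiff ℝ (⊤:ℕ∞) (fderiv ℝ u) := hu.fderiv_right (by norm_cast)
  exact contDiff_const.mul ((h.clm_apply contDiff_const).sub
    (contDiff_const.mul (h.clm_apply contDiff_const)))

lemma contDiff_wDb (u : (Fin n → ℂ) → ℂ) (hu : ContDiff ℝ (⊤:ℕ∞) u) :
    ContDiff ℝ (⊤:ℕ∞) (wDb i u) := by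
  have h : ContDiff ℝ (⊤:ℕ∞) (fderiv ℝ u) := hu.fderiv_right (by norm_cast)
  exact contDiff_const.mul ((h.clm_apply contDiff_const).add
    (contDiff_const.mul (h.clm_apply contDiff_const)))

lemma hcs_wD (u : (Fin n → ℂ) → ℂ) (hu : HasCompactSupport u) : HasCompactSupport (wD i u) := by
  have h := hu.fderiv ℝ
  have e : wD i u = (fun L : (Fin n → ℂ) →L[ℝ] ℂ =>
      (1/2 : ℂ) * (L (Pi.single i 1) - Complex.I * L (Pi.single i Complex.I))) ∘ fderiv ℝ u := rfl
  rw [e]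
  exact h.comp_left (by simp)

lemma hcs_wDb (u : (Fin n → ℂ) → ℂ) (hu : HasCompactSupport u) : HasCompactSupport (wDb i u) := by
  have h := hu.fderiv ℝ
  have e : wDb i u = (fun L : (Fin n → ℂ) →L[ℝ] ℂ =>
      (1/2 : ℂ) * (L (Pi.single i 1) + Complex.I * L (Pi.single i Complex.I))) ∘ fderiv ℝ u := rfl
  rw [e]
  exact h.comp_left (by simp)

lemma wD_mul (u v : (Fin n → ℂ) → ℂ) (hu : Differentiable ℝ u) (hv : Differentiable ℝ v)
    (z : Fin n → ℂ) :
    wD i (fun w => u w * v w) z = wD i u z * v z + u z * wD i v z := by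
  have h := fderiv_fun_mul (hu z) (hv z)
  simp only [wD, h]
  simp only [ContinuousLinearMap.add_apply, ContinuousLinearMap.smul_apply, smul_eq_mul]
  ring

lemma wDb_mul (u v : (Fin n → ℂ) → ℂ) (hu : Differentiable ℝ u) (hv : Differentiable ℝ v)
    (z : Fin n → ℂ) :
    wDb i (fun w => u w * v w) z = wDb i u z * v z + u z * wDb i v z := by
  have h := fderiv_fun_mul (hu z) (hv z)
  simp only [wDb, h]
  simp only [ContinuousLinearMap.add_apply, ContinuousLinearMap.smul_apply, smul_eq_mul]
  ring

lemma wD_add (u v : (Fin n → ℂ) → ℂ) (hu : Differentiable ℝ u) (hv : Differentiable ℝ v)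
    (z : Fin n → ℂ) :
    wD i (fun w => u w + v w) z = wD i u z + wD i v z := by
  simp only [wD, fderiv_fun_add (hu z) (hv z), ContinuousLinearMap.add_apply]
  ring

lemma wDb_add (u v : (Fin n → ℂ) → ℂ) (hu : Differentiable ℝ u) (hv : Differentiable ℝ v)
    (z : Fin n → ℂ) :
    wDb i (fun w => u w + v w) z = wDb i u z + wDb i v z := by
  simp only [wDb, fderiv_fun_add (hu z) (hv z), ContinuousLinearMap.add_apply]
  ring

lemma wD_neg (u : (Fin n → ℂ) → ℂ) (z : Fin n → ℂ) :
    wD i (fun w => -(u w)) z = -(wD i u z) := by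
  simp only [wD, fderiv_fun_neg, ContinuousLinearMap.neg_apply]
  ring

lemma fderiv_conj' (u : (Fin n → ℂ) → ℂ) (hu : Differentiable ℝ u) (z v : Fin n → ℂ) :
    fderiv ℝ (fun w => starRingEnd ℂ (u w)) z v = starRingEnd ℂ (fderiv ℝ u z v) := by
  have h : HasFDerivAt (fun w => Complex.conjCLE (u w))
      ((Complex.conjCLE : ℂ →L[ℝ] ℂ).comp (fderiv ℝ u z)) z :=
    Complex.conjCLE.toContinuousLinearMap.hasFDerivAt.comp z (hu z).hasFDerivAt
  have h2 := h.fderiv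
  have h3 : (fun w => Complex.conjCLE (u w)) = fun w => starRingEnd ℂ (u w) := by
    ext w; simp [Complex.conjCLE_apply]
  rw [h3] at h2
  rw [h2]
  simp [Complex.conjCLE_apply]

lemma wD_conj (u : (Fin n → ℂ) → ℂ) (hu : Differentiable ℝ u) (z : Fin n → ℂ) :
    wD i (fun w => starRingEnd ℂ (u w)) z = starRingEnd ℂ (wDb i u z) := by
  simp only [wD, wDb, fderiv_conj' u hu, map_mul, map_add, map_one, map_ofNat, map_div₀,
    Complex.conj_I]
  ring

lemma wDb_conj (u : (Fin n → ℂ) → ℂ) (hu : Differentiable ℝ u) (z : Fin n → ℂ) :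
    wDb i (fun w => starRingEnd ℂ (u w)) z = starRingEnd ℂ (wD i u z) := by
  simp only [wD, wDb, fderiv_conj' u hu, map_mul, map_sub, map_one, map_ofNat, map_div₀,
    Complex.conj_I]
  ring

lemma wD_wDb_comm (u : (Fin n → ℂ) → ℂ) (hu : ContDiff ℝ (⊤:ℕ∞) u) (z : Fin n → ℂ) :
    wD i (wDb i u) z = wDb i (wD i u) z := by
  have hfd : ContDiff ℝ (⊤:ℕ∞) (fderiv ℝ u) := hu.fderiv_right (by norm_cast)
  have hd : ∀ (a z v : Fin n → ℂ),
      fderiv ℝ (fun w => fderiv ℝ u w a) z v = fderiv ℝ (fderiv ℝ u) z v a := by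
    intro a z v
    rw [fderiv_clm_apply (hfd.differentiable (by norm_cast) z) (differentiableAt_const a)]
    simp
  have hsymm : ∀ v w, fderiv ℝ (fderiv ℝ u) z v w = fderiv ℝ (fderiv ℝ u) z w v :=
    (hu.contDiffAt).isSymmSndFDerivAt (by simp [minSmoothness_of_isRCLikeNormedField]; exact WithTop.coe_le_coe.mpr le_top)
  have hda : ∀ (a : Fin n → ℂ), Differentiable ℝ (fun w => fderiv ℝ u w a) :=
    fun a => ((hfd.clm_apply contDiff_const).differentiable (by norm_cast))
  unfold wD wDb
  rw [fderiv_const_mul, fderiv_const_mul]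
  · set a := Pi.single (M := fun _ : Fin n => ℂ) i 1 with ha
    set b := Pi.single (M := fun _ : Fin n => ℂ) i Complex.I with hb
    have hAdd : ∀ v, fderiv ℝ (fun w => fderiv ℝ u w a + Complex.I * fderiv ℝ u w b) z v
        = fderiv ℝ (fderiv ℝ u) z v a + Complex.I * fderiv ℝ (fderiv ℝ u) z v b := by
      intro v
      rw [fderiv_fun_add ((hda a) z) (((hda b).const_mul _) z)]
      simp only [ContinuousLinearMap.add_apply]
      rw [fderiv_const_mul ((hda b) z)]
      simp only [ContinuousLinearMap.smul_apply, smul_eq_mul, hd]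
    have hSub : ∀ v, fderiv ℝ (fun w => fderiv ℝ u w a - Complex.I * fderiv ℝ u w b) z v
        = fderiv ℝ (fderiv ℝ u) z v a - Complex.I * fderiv ℝ (fderiv ℝ u) z v b := by
      intro v
      rw [fderiv_fun_sub ((hda a) z) (((hda b).const_mul _) z)]
      simp only [ContinuousLinearMap.sub_apply]
      rw [fderiv_const_mul ((hda b) z)]
      simp only [ContinuousLinearMap.smul_apply, smul_eq_mul, hd]
    simp only [ContinuousLinearMap.smul_apply, smul_eq_mul]
    rw [hAdd, hAdd, hSub, hSub, hsymm a b]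
    ring
  · exact ((hda _).sub ((hda _).const_mul _)) z
  · exact ((hda _).add ((hda _).const_mul _)) z

lemma lineDeriv_const' {E : Type*} [NormedAddCommGroup E] [NormedSpace ℝ E] (c : ℝ) (x v : E) :
    lineDeriv ℝ (fun _ : E => c) x v = 0 := by
  have h : HasLineDerivAt ℝ (fun _ : E => c) 0 x v :=
    (hasFDerivAt_const c x).hasLineDerivAt v |>.congr_deriv (by simp)
  exact h.lineDeriv

lemma integral_dirD_real (g : (Fin n → ℂ) → ℝ) (hg : ContDiff ℝ (⊤:ℕ∞) g)
    (hgc : HasCompactSupport g) (v : Fin n → ℂ) :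
    ∫ z : Fin n → ℂ, fderiv ℝ g z v = 0 := by
  have hfd : ContDiff ℝ (⊤:ℕ∞) (fderiv ℝ g) := hg.fderiv_right (by norm_cast)
  obtain ⟨C, hC⟩ := (hgc.fderiv ℝ).exists_bound_of_continuous hfd.continuous
  have hdiff := hg.differentiable (by norm_cast)
  have hlip : LipschitzWith C.toNNReal g :=
    lipschitzWith_of_nnnorm_fderiv_le hdiff (fun x => by
      rw [← NNReal.coe_le_coe, coe_nnnorm, Real.coe_toNNReal']
      exact (hC x).trans (le_max_left _ _))
  have key := LipschitzWith.integral_lineDeriv_mul_eq (μ := volume)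
      (LipschitzWith.const (1:ℝ)) hlip hgc (-v)
  simp only [lineDeriv_const', zero_mul, integral_zero, mul_one, neg_neg] at key
  have h : ∀ z, lineDeriv ℝ g z v = fderiv ℝ g z v := fun z =>
    ((hdiff z).hasFDerivAt.hasLineDerivAt v).lineDeriv
  rw [← integral_congr_ae (Filter.Eventually.of_forall h)]
  exact key.symm

lemma fderiv_re' (u : (Fin n → ℂ) → ℂ) (hu : Differentiable ℝ u) (z v : Fin n → ℂ) :
    (fderiv ℝ u z v).re = fderiv ℝ (fun w => (u w).re) z v := by
  have h : HasFDerivAt (fun w => Complex.reCLM (u w))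
      ((Complex.reCLM : ℂ →L[ℝ] ℝ).comp (fderiv ℝ u z)) z :=
    Complex.reCLM.hasFDerivAt.comp z (hu z).hasFDerivAt
  have h2 : fderiv ℝ (fun w => (u w).re) z = Complex.reCLM.comp (fderiv ℝ u z) :=
    HasFDerivAt.fderiv (by exact h)
  rw [h2]; simp

lemma fderiv_im' (u : (Fin n → ℂ) → ℂ) (hu : Differentiable ℝ u) (z v : Fin n → ℂ) :
    (fderiv ℝ u z v).im = fderiv ℝ (fun w => (u w).im) z v := by
  have h : HasFDerivAt (fun w => Complex.imCLM (u w))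
      ((Complex.imCLM : ℂ →L[ℝ] ℝ).comp (fderiv ℝ u z)) z :=
    Complex.imCLM.hasFDerivAt.comp z (hu z).hasFDerivAt
  have h2 : fderiv ℝ (fun w => (u w).im) z = Complex.imCLM.comp (fderiv ℝ u z) :=
    HasFDerivAt.fderiv (by exact h)
  rw [h2]; simp

lemma integral_wDb_re (u : (Fin n → ℂ) → ℂ) (hu : ContDiff ℝ (⊤:ℕ∞) u)
    (huc : HasCompactSupport u) :
    (∫ z : Fin n → ℂ, (wDb i u z).re) = 0 := by
  have hud : Differentiable ℝ u := hu.differentiable (by norm_cast)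
  have hre : ∀ z, (wDb i u z).re = (1/2 : ℝ) * (fderiv ℝ (fun w => (u w).re) z (Pi.single i 1)
      - fderiv ℝ (fun w => (u w).im) z (Pi.single i Complex.I)) := by
    intro z
    rw [← fderiv_re' u hud, ← fderiv_im' u hud]
    simp [wDb, Complex.add_re, Complex.mul_re]
    ring
  simp only [hre]
  have hur : ContDiff ℝ (⊤:ℕ∞) (fun w => (u w).re) := Complex.reCLM.contDiff.comp hu
  have hui : ContDiff ℝ (⊤:ℕ∞) (fun w => (u w).im) := Complex.imCLM.contDiff.comp hu
  have hurc : HasCompactSupport (fun w => (u w).re) := huc.comp_left (by simp)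
  have huic : HasCompactSupport (fun w => (u w).im) := huc.comp_left (by simp)
  have hur' : ContDiff ℝ (⊤:ℕ∞) (fderiv ℝ (fun w => (u w).re)) := hur.fderiv_right (by norm_cast)
  have hui' : ContDiff ℝ (⊤:ℕ∞) (fderiv ℝ (fun w => (u w).im)) := hui.fderiv_right (by norm_cast)
  have int1 : Integrable (fun z : Fin n → ℂ => fderiv ℝ (fun w => (u w).re) z (Pi.single i 1)) :=
    ((hur'.clm_apply contDiff_const).continuous).integrable_of_hasCompactSupport
      ((hurc.fderiv ℝ).comp_left
        (g := fun L : (Fin n → ℂ) →L[ℝ] ℝ => L (Pi.single i 1)) (by simp))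
  have int2 : Integrable
      (fun z : Fin n → ℂ => fderiv ℝ (fun w => (u w).im) z (Pi.single i Complex.I)) :=
    ((hui'.clm_apply contDiff_const).continuous).integrable_of_hasCompactSupport
      ((huic.fderiv ℝ).comp_left
        (g := fun L : (Fin n → ℂ) →L[ℝ] ℝ => L (Pi.single i Complex.I)) (by simp))
  rw [integral_const_mul, integral_sub int1 int2,
    integral_dirD_real _ hur hurc _, integral_dirD_real _ hui huic _]
  simp

lemma integral_wD_re (u : (Fin n → ℂ) → ℂ) (hu : ContDiff ℝ (⊤:ℕ∞) u)
    (huc : HasCompactSupport u) :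
    (∫ z : Fin n → ℂ, (wD i u z).re) = 0 := by
  have hud : Differentiable ℝ u := hu.differentiable (by norm_cast)
  have hre : ∀ z, (wD i u z).re = (1/2 : ℝ) * (fderiv ℝ (fun w => (u w).re) z (Pi.single i 1)
      + fderiv ℝ (fun w => (u w).im) z (Pi.single i Complex.I)) := by
    intro z
    rw [← fderiv_re' u hud, ← fderiv_im' u hud]
    simp [wD, Complex.sub_re, Complex.mul_re]
  simp only [hre]
  have hur : ContDiff ℝ (⊤:ℕ∞) (fun w => (u w).re) := Complex.reCLM.contDiff.comp hu
  have hui : ContDiff ℝ (⊤:ℕ∞) (fun w => (u w).im) := Complex.imCLM.contDiff.comp hu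
  have hurc : HasCompactSupport (fun w => (u w).re) := huc.comp_left (by simp)
  have huic : HasCompactSupport (fun w => (u w).im) := huc.comp_left (by simp)
  have hur' : ContDiff ℝ (⊤:ℕ∞) (fderiv ℝ (fun w => (u w).re)) := hur.fderiv_right (by norm_cast)
  have hui' : ContDiff ℝ (⊤:ℕ∞) (fderiv ℝ (fun w => (u w).im)) := hui.fderiv_right (by norm_cast)
  have int1 : Integrable (fun z : Fin n → ℂ => fderiv ℝ (fun w => (u w).re) z (Pi.single i 1)) :=
    ((hur'.clm_apply contDiff_const).continuous).integrable_of_hasCompactSupport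
      ((hurc.fderiv ℝ).comp_left
        (g := fun L : (Fin n → ℂ) →L[ℝ] ℝ => L (Pi.single i 1)) (by simp))
  have int2 : Integrable
      (fun z : Fin n → ℂ => fderiv ℝ (fun w => (u w).im) z (Pi.single i Complex.I)) :=
    ((hui'.clm_apply contDiff_const).continuous).integrable_of_hasCompactSupport
      ((huic.fderiv ℝ).comp_left
        (g := fun L : (Fin n → ℂ) →L[ℝ] ℝ => L (Pi.single i Complex.I)) (by simp))
  rw [integral_const_mul, integral_add int1 int2,
    integral_dirD_real _ hur hurc _, integral_dirD_real _ hui huic _]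
  simp

end Aux

set_option maxHeartbeats 1000000 in
/-- the key one-dimensional estimates.  Writing
`D z = ∂²φ/∂zⁱ∂z̄ⁱ (z)` (a real number since `φ` is real):
* if `D < -c` everywhere then `∫ |∂f/∂z̄ⁱ + (∂φ/∂z̄ⁱ) f|² ≥ -2 ∫ |f|² D ≥ 2c ∫ |f|²`;
* if `D > c` everywhere then `∫ |-∂f/∂zⁱ + (∂φ/∂zⁱ) f|² ≥ 2 ∫ |f|² D ≥ 2c ∫ |f|²`. -/
theorem stmt_3 (n : ℕ) (i : Fin n) (φ : (Fin n → ℂ) → ℝ) (hφ : ContDiff ℝ (⊤ : ℕ∞) φ)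
    (c : ℝ) (hc : 0 < c)
    (f : (Fin n → ℂ) → ℂ) (hf : ContDiff ℝ (⊤ : ℕ∞) f) (hfc : HasCompactSupport f) :
    ((∀ z, (wD i (fun w => wDb i (fun v => (φ v : ℂ)) w) z).re < -c) →
      ((∫ z : Fin n → ℂ,
          (-2) * ‖f z‖ ^ 2 * (wD i (fun w => wDb i (fun v => (φ v : ℂ)) w) z).re)
        ≤ ∫ z : Fin n → ℂ,
            ‖wDb i f z + wDb i (fun w => (φ w : ℂ)) z * f z‖ ^ 2) ∧
      (2 * c * ∫ z : Fin n → ℂ, ‖f z‖ ^ 2)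
        ≤ ∫ z : Fin n → ℂ,
            ‖wDb i f z + wDb i (fun w => (φ w : ℂ)) z * f z‖ ^ 2) ∧
    ((∀ z, c < (wD i (fun w => wDb i (fun v => (φ v : ℂ)) w) z).re) →
      ((∫ z : Fin n → ℂ,
          2 * ‖f z‖ ^ 2 * (wD i (fun w => wDb i (fun v => (φ v : ℂ)) w) z).re)
        ≤ ∫ z : Fin n → ℂ,
            ‖-(wD i f z) + wD i (fun w => (φ w : ℂ)) z * f z‖ ^ 2) ∧
      (2 * c * ∫ z : Fin n → ℂ, ‖f z‖ ^ 2)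
        ≤ ∫ z : Fin n → ℂ,
            ‖-(wD i f z) + wD i (fun w => (φ w : ℂ)) z * f z‖ ^ 2) := by
  -- clean up eta-expanded forms
  suffices H : ((∀ z, (wD i (wDb i (fun v => (φ v : ℂ))) z).re < -c) →
      ((∫ z : Fin n → ℂ,
          (-2) * ‖f z‖ ^ 2 * (wD i (wDb i (fun v => (φ v : ℂ))) z).re)
        ≤ ∫ z : Fin n → ℂ,
            ‖wDb i f z + wDb i (fun w => (φ w : ℂ)) z * f z‖ ^ 2) ∧
      (2 * c * ∫ z : Fin n → ℂ, ‖f z‖ ^ 2)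
        ≤ ∫ z : Fin n → ℂ,
            ‖wDb i f z + wDb i (fun w => (φ w : ℂ)) z * f z‖ ^ 2) ∧
    ((∀ z, c < (wD i (wDb i (fun v => (φ v : ℂ))) z).re) →
      ((∫ z : Fin n → ℂ,
          2 * ‖f z‖ ^ 2 * (wD i (wDb i (fun v => (φ v : ℂ))) z).re)
        ≤ ∫ z : Fin n → ℂ,
            ‖-(wD i f z) + wD i (fun w => (φ w : ℂ)) z * f z‖ ^ 2) ∧
      (2 * c * ∫ z : Fin n → ℂ, ‖f z‖ ^ 2)
        ≤ ∫ z : Fin n → ℂ,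
            ‖-(wD i f z) + wD i (fun w => (φ w : ℂ)) z * f z‖ ^ 2) by
    exact H
  set φc : (Fin n → ℂ) → ℂ := fun v => (φ v : ℂ) with hφcdef
  have hφc : ContDiff ℝ (⊤:ℕ∞) φc := by
    exact Complex.ofRealCLM.contDiff.comp hφ
  set g : (Fin n → ℂ) → ℂ := fun w => starRingEnd ℂ (f w) with hgdef
  have hg : ContDiff ℝ (⊤:ℕ∞) g := by
    exact Complex.conjCLE.toContinuousLinearMap.contDiff.comp hf
  have hgc : HasCompactSupport g := by
    exact hfc.comp_left (g := fun x : ℂ => starRingEnd ℂ x) (by simp)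
  have hfd : Differentiable ℝ f := hf.differentiable (by norm_cast)
  have hgd : Differentiable ℝ g := hg.differentiable (by norm_cast)
  have hφcd : Differentiable ℝ φc := hφc.differentiable (by norm_cast)
  -- derivatives are differentiable
  have hwDg : Differentiable ℝ (wD i g) := (contDiff_wD i g hg).differentiable (by norm_cast)
  have hwDbg : Differentiable ℝ (wDb i g) := (contDiff_wDb i g hg).differentiable (by norm_cast)
  have hp : Differentiable ℝ (wD i φc) := (contDiff_wD i φc hφc).differentiable (by norm_cast)
  have hpb : Differentiable ℝ (wDb i φc) := (contDiff_wDb i φc hφc).differentiable (by norm_cast)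
  have hfg : Differentiable ℝ (fun w => f w * g w) := hfd.mul hgd
  -- conjugation identities
  have hc1 : ∀ z, starRingEnd ℂ (wDb i f z) = wD i g z := fun z => (wD_conj i f hfd z).symm
  have hc2 : ∀ z, starRingEnd ℂ (wD i f z) = wDb i g z := fun z => (wDb_conj i f hfd z).symm
  have ephi : (fun w => starRingEnd ℂ (φc w)) = φc := by
    funext w; exact Complex.conj_ofReal _
  have hc3 : ∀ z, starRingEnd ℂ (wDb i φc z) = wD i φc z := by
    intro z
    rw [← wD_conj i φc hφcd z, ephi]
  have hc3' : ∀ z, starRingEnd ℂ (wD i φc z) = wDb i φc z := by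
    intro z
    rw [← wDb_conj i φc hφcd z, ephi]
  have hc4 : ∀ z, starRingEnd ℂ (f z) = g z := fun _ => rfl
  -- the key pointwise identity
  have keyC : ∀ z,
      wDb i (fun w => f w * wD i g w + wD i φc w * (f w * g w)) z
        + wD i (fun w => -(f w * wDb i g w) + wDb i φc w * (f w * g w)) z
      = (wDb i f z + wDb i φc z * f z) * starRingEnd ℂ (wDb i f z + wDb i φc z * f z)
        - (-(wD i f z) + wD i φc z * f z) * starRingEnd ℂ (-(wD i f z) + wD i φc z * f z)
        + 2 * wD i (wDb i φc) z * (f z * g z) := by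
    intro z
    rw [wDb_add i (fun w => f w * wD i g w) (fun w => wD i φc w * (f w * g w))
        (hfd.mul hwDg) (hp.mul hfg) z,
      wDb_mul i f (wD i g) hfd hwDg z,
      wDb_mul i (wD i φc) (fun w => f w * g w) hp hfg z,
      wDb_mul i f g hfd hgd z,
      wD_add i (fun w => -(f w * wDb i g w)) (fun w => wDb i φc w * (f w * g w))
        (hfd.mul hwDbg).neg (hpb.mul hfg) z,
      wD_neg i (fun w => f w * wDb i g w) z,
      wD_mul i f (wDb i g) hfd hwDbg z,
      wD_mul i (wDb i φc) (fun w => f w * g w) hpb hfg z,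
      wD_mul i f g hfd hgd z,
      ← wD_wDb_comm i g hg z, ← wD_wDb_comm i φc hφc z,
      map_add, map_add, map_mul, map_mul, map_neg,
      hc1, hc2, hc3, hc4]
    simp only [hc3']
    ring
  -- real part version
  have keyR : ∀ z,
      (wDb i (fun w => f w * wD i g w + wD i φc w * (f w * g w)) z).re
        + (wD i (fun w => -(f w * wDb i g w) + wDb i φc w * (f w * g w)) z).re
      = ‖wDb i f z + wDb i φc z * f z‖ ^ 2
        - ‖-(wD i f z) + wD i φc z * f z‖ ^ 2
        + 2 * ‖f z‖ ^ 2 * (wD i (wDb i φc) z).re := by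
    intro z
    have h := congrArg Complex.re (keyC z)
    rw [Complex.add_re] at h
    rw [h]
    have e1 : ∀ w : ℂ, w * starRingEnd ℂ w = (‖w‖ ^ 2 : ℝ) := by
      intro w; rw [Complex.mul_conj, Complex.sq_norm]
    have e2 : f z * g z = ((‖f z‖ ^ 2 : ℝ) : ℂ) := by
      rw [← hc4 z, Complex.mul_conj, Complex.sq_norm]
    rw [e1, e1, e2]
    simp [Complex.add_re, Complex.sub_re, Complex.mul_re, ← Complex.ofReal_pow]
    ring
  -- smoothness and support of G and H
  have hG : ContDiff ℝ (⊤:ℕ∞) (fun w => f w * wD i g w + wD i φc w * (f w * g w)) :=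
    (hf.mul (contDiff_wD i g hg)).add ((contDiff_wD i φc hφc).mul (hf.mul hg))
  have hH : ContDiff ℝ (⊤:ℕ∞) (fun w => -(f w * wDb i g w) + wDb i φc w * (f w * g w)) :=
    (hf.mul (contDiff_wDb i g hg)).neg.add ((contDiff_wDb i φc hφc).mul (hf.mul hg))
  have hfgc : HasCompactSupport (fun w => f w * g w) := hfc.mul_right
  have hGc : HasCompactSupport (fun w => f w * wD i g w + wD i φc w * (f w * g w)) :=
    (hfc.mul_right).add (hfgc.mul_left)
  have hHc : HasCompactSupport (fun w => -(f w * wDb i g w) + wDb i φc w * (f w * g w)) :=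
    HasCompactSupport.add
      ((HasCompactSupport.mul_right hfc).comp_left (g := Neg.neg) neg_zero)
      (hfgc.mul_left)
  -- integrals of the divergence terms vanish
  have iG : (∫ z : Fin n → ℂ,
      (wDb i (fun w => f w * wD i g w + wD i φc w * (f w * g w)) z).re) = 0 :=
    integral_wDb_re i _ hG hGc
  have iH : (∫ z : Fin n → ℂ,
      (wD i (fun w => -(f w * wDb i g w) + wDb i φc w * (f w * g w)) z).re) = 0 :=
    integral_wD_re i _ hH hHc
  have intG : Integrable (fun z : Fin n → ℂ =>
      (wDb i (fun w => f w * wD i g w + wD i φc w * (f w * g w)) z).re) :=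
    (Complex.continuous_re.comp (contDiff_wDb i _ hG).continuous).integrable_of_hasCompactSupport
      ((hcs_wDb i _ hGc).comp_left (g := Complex.re) (by simp))
  have intH : Integrable (fun z : Fin n → ℂ =>
      (wD i (fun w => -(f w * wDb i g w) + wDb i φc w * (f w * g w)) z).re) :=
    (Complex.continuous_re.comp (contDiff_wD i _ hH).continuous).integrable_of_hasCompactSupport
      ((hcs_wD i _ hHc).comp_left (g := Complex.re) (by simp))
  have S0 : (∫ z : Fin n → ℂ,
      ((wDb i (fun w => f w * wD i g w + wD i φc w * (f w * g w)) z).re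
        + (wD i (fun w => -(f w * wDb i g w) + wDb i φc w * (f w * g w)) z).re)) = 0 := by
    rw [integral_add intG intH, iG, iH]; norm_num
  -- integrability of the three main integrands
  have contA : Continuous (fun z : Fin n → ℂ => wDb i f z + wDb i φc z * f z) :=
    (contDiff_wDb i f hf).continuous.add
      ((contDiff_wDb i φc hφc).continuous.mul hf.continuous)
  have csA : HasCompactSupport (fun z : Fin n → ℂ => wDb i f z + wDb i φc z * f z) :=
    (hcs_wDb i f hfc).add (hfc.mul_left)
  have intA : Integrable (fun z : Fin n → ℂ =>
      ‖wDb i f z + wDb i φc z * f z‖ ^ 2) :=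
    by
      have h1 : HasCompactSupport (fun z : Fin n → ℂ => ‖wDb i f z + wDb i φc z * f z‖ ^ 2) :=
        csA.comp_left (g := fun w : ℂ => ‖w‖ ^ 2) (by simp)
      exact (contA.norm.pow 2).integrable_of_hasCompactSupport h1
  have contB : Continuous (fun z : Fin n → ℂ => -(wD i f z) + wD i φc z * f z) :=
    (contDiff_wD i f hf).continuous.neg.add
      ((contDiff_wD i φc hφc).continuous.mul hf.continuous)
  have csB : HasCompactSupport (fun z : Fin n → ℂ => -(wD i f z) + wD i φc z * f z) :=
    (((hcs_wD i f hfc).comp_left (g := Neg.neg) neg_zero)).add (hfc.mul_left)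
  have intB : Integrable (fun z : Fin n → ℂ =>
      ‖-(wD i f z) + wD i φc z * f z‖ ^ 2) :=
    by
      have h1 : HasCompactSupport (fun z : Fin n → ℂ => ‖-(wD i f z) + wD i φc z * f z‖ ^ 2) :=
        csB.comp_left (g := fun w : ℂ => ‖w‖ ^ 2) (by simp)
      exact (contB.norm.pow 2).integrable_of_hasCompactSupport h1
  have contDre : Continuous (fun z : Fin n → ℂ => (wD i (wDb i φc) z).re) :=
    Complex.continuous_re.comp (contDiff_wD i _ (contDiff_wDb i φc hφc)).continuous
  have intD : Integrable (fun z : Fin n → ℂ =>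
      2 * ‖f z‖ ^ 2 * (wD i (wDb i φc) z).re) := by
    have cont : Continuous (fun z : Fin n → ℂ =>
        2 * ‖f z‖ ^ 2 * (wD i (wDb i φc) z).re) :=
      (continuous_const.mul (hf.continuous.norm.pow 2)).mul contDre
    refine cont.integrable_of_hasCompactSupport ?_
    have hcs2 : HasCompactSupport (fun z : Fin n → ℂ => 2 * ‖f z‖ ^ 2) :=
      hfc.comp_left (g := fun w : ℂ => 2 * ‖w‖ ^ 2) (by simp)
    exact hcs2.mul_right
  have intff : Integrable (fun z : Fin n → ℂ => ‖f z‖ ^ 2) :=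
    by
      have h1 : HasCompactSupport (fun z : Fin n → ℂ => ‖f z‖ ^ 2) :=
        hfc.comp_left (g := fun w : ℂ => ‖w‖ ^ 2) (by simp)
      exact (hf.continuous.norm.pow 2).integrable_of_hasCompactSupport h1
  -- the integral identity
  simp only [keyR] at S0
  have intAB : Integrable (fun z : Fin n → ℂ =>
      ‖wDb i f z + wDb i φc z * f z‖ ^ 2
        - ‖-(wD i f z) + wD i φc z * f z‖ ^ 2) := intA.sub intB
  rw [integral_add intAB intD, integral_sub intA intB] at S0
  have hA0 : 0 ≤ ∫ z : Fin n → ℂ, ‖wDb i f z + wDb i φc z * f z‖ ^ 2 :=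
    integral_nonneg (fun z => by positivity)
  have hB0 : 0 ≤ ∫ z : Fin n → ℂ, ‖-(wD i f z) + wD i φc z * f z‖ ^ 2 :=
    integral_nonneg (fun z => by positivity)
  refine ⟨fun h1 => ⟨?_, ?_⟩, fun h2 => ⟨?_, ?_⟩⟩
  · have eneg : (fun z : Fin n → ℂ =>
        (-2) * ‖f z‖ ^ 2 * (wD i (wDb i φc) z).re)
        = fun z : Fin n → ℂ => -(2 * ‖f z‖ ^ 2 * (wD i (wDb i φc) z).re) := by
      funext z; ring
    rw [eneg, integral_neg]
    linarith [S0, hB0]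
  · have hmono : (∫ z : Fin n → ℂ, 2 * c * ‖f z‖ ^ 2)
        ≤ ∫ z : Fin n → ℂ, -(2 * ‖f z‖ ^ 2 * (wD i (wDb i φc) z).re) := by
      refine integral_mono (intff.const_mul (2 * c)) intD.neg (fun z => ?_)
      have h := h1 z
      have hx : 0 ≤ ‖f z‖ ^ 2 := by positivity
      simp only
      nlinarith
    rw [integral_const_mul, integral_neg] at hmono
    linarith [S0, hB0]
  · linarith [S0, hA0]
  · have hmono : (∫ z : Fin n → ℂ, 2 * c * ‖f z‖ ^ 2)
        ≤ ∫ z : Fin n → ℂ, 2 * ‖f z‖ ^ 2 * (wD i (wDb i φc) z).re := by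
      refine integral_mono (intff.const_mul (2 * c)) intD (fun z => ?_)
      have h := h2 z
      have hx : 0 ≤ ‖f z‖ ^ 2 := by positivity
      simp only
      nlinarith
    rw [integral_const_mul] at hmono
    linarith [S0, hA0]
end

section
/- A smooth function f on ℂⁿ satisfies the first-order system ∂f/∂zⁱ − λᵢ\bar{z}ⁱ f = 0 for all 1 ≤ i ≤ q and ∂f/∂\bar{z}ⁱ + λᵢzⁱ f = 0 for all q+1 ≤ i ≤ n if and only if F(z) := f(\bar{z}¹,…,\bar{z}^q, z^{q+1},…,zⁿ) · e^{−Σᵢ₌₁^q λᵢ|zⁱ|² + Σ_{i>q} λᵢ|zⁱ|²} is holomorphic on ℂⁿ. -/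
/-! Conjugating the first `q` coordinates (the map `σ = conjFirst q`) exchanges `∂/∂zⁱ` and
`∂/∂z̄ⁱ` for `i < q`, and the weight `φ = modelWeight q lam` has `∂φ/∂z̄ⁱ = ∓λᵢ zⁱ`. By the Leibniz
rule, `∂F/∂z̄ⁱ (z) = e^{φ(z)}` times the `i`-th equation of the system evaluated at `σ z`. Since `σ`
is an involution and `e^φ` never vanishes, the system holds everywhere iff every `∂F/∂z̄ⁱ`
vanishes, i.e. iff the ℝ-differentiable function `F` is holomorphic. -/

open Complex ComplexConjugate

section Wirtinger

variable {n : ℕ} {i : Fin n} {F G : (Fin n → ℂ) → ℂ} {z : Fin n → ℂ}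

theorem wDb_eq_zero_of_differentiableAt (hF : DifferentiableAt ℂ F z) : wDb i F z = 0 := by
  have hI : (Pi.single i I : Fin n → ℂ) = I • Pi.single i 1 := by
    rw [← Pi.single_smul', smul_eq_mul, mul_one]
  rw [wDb, hF.fderiv_restrictScalars ℝ, ContinuousLinearMap.coe_restrictScalars', hI, map_smul,
    smul_eq_mul]
  linear_combination (1 / 2) * fderiv ℂ F z (Pi.single i 1) * I_sq

theorem apply_single_eq_mul_of_apply_single_I {L : (Fin n → ℂ) →L[ℝ] ℂ}
    (hL : L (Pi.single i I) = I * L (Pi.single i 1)) (c : ℂ) :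
    L (Pi.single i c) = c * L (Pi.single i 1) := by
  have hc : (Pi.single i c : Fin n → ℂ) =
      c.re • (Pi.single i 1 : Fin n → ℂ) + c.im • (Pi.single i I : Fin n → ℂ) := by
    rw [← Pi.single_smul', ← Pi.single_smul', ← Pi.single_add]
    congr 1
    apply Complex.ext <;> simp
  rw [hc, map_add, map_smul, map_smul, hL, real_smul, real_smul]
  conv_rhs => rw [← re_add_im c]
  ring

theorem differentiableAt_of_wDb_eq_zero (hF : DifferentiableAt ℝ F z)
    (h : ∀ i, wDb i F z = 0) : DifferentiableAt ℂ F z := by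
  set L := fderiv ℝ F z
  have hL : ∀ i, L (Pi.single i I) = I * L (Pi.single i 1) := fun i => by
    have := h i
    unfold wDb at this
    linear_combination (-2 * I) * this + L (Pi.single i I) * I_sq
  refine (differentiableAt_iff_restrictScalars ℝ hF).2
    ⟨∑ j, L (Pi.single j 1) • ContinuousLinearMap.proj j, ?_⟩
  ext v
  conv_rhs => rw [← Finset.univ_sum_single v]
  simp only [ContinuousLinearMap.coe_restrictScalars', sum_apply, smul_apply,
    ContinuousLinearMap.proj_apply, smul_eq_mul, map_sum]
  exact Finset.sum_congr rfl fun j _ =>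
    (mul_comm _ _).trans (apply_single_eq_mul_of_apply_single_I (hL j) (v j)).symm

theorem wDb_mul_s11 (hF : DifferentiableAt ℝ F z) (hG : DifferentiableAt ℝ G z) :
    wDb i (fun z => F z * G z) z = F z * wDb i G z + G z * wDb i F z := by
  simp only [wDb, fderiv_fun_mul hF hG, add_apply, smul_apply, smul_eq_mul]
  ring

theorem wDb_const_mul (hF : DifferentiableAt ℝ F z) (c : ℂ) :
    wDb i (fun z => c * F z) z = c * wDb i F z := by
  rw [wDb_mul_s11 (differentiableAt_const c) hF,
    wDb_eq_zero_of_differentiableAt (differentiableAt_const c), mul_zero, add_zero]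

theorem wDb_sum {ι : Type*} (s : Finset ι) {F : ι → (Fin n → ℂ) → ℂ}
    (hF : ∀ j ∈ s, DifferentiableAt ℝ (F j) z) :
    wDb i (fun z => ∑ j ∈ s, F j z) z = ∑ j ∈ s, wDb i (F j) z := by
  simp only [wDb, fderiv_fun_sum hF, sum_apply, Finset.mul_sum]
  rw [← Finset.sum_add_distrib, Finset.mul_sum]

theorem wDb_cexp (hF : DifferentiableAt ℝ F z) :
    wDb i (fun z => exp (F z)) z = exp (F z) * wDb i F z := by
  simp only [wDb, hF.hasFDerivAt.cexp.fderiv, smul_apply, smul_eq_mul]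
  ring

theorem wDb_apply (j : Fin n) : wDb i (fun z => z j) z = 0 :=
  wDb_eq_zero_of_differentiableAt (differentiableAt_apply j z)

theorem wDb_conj_apply (j : Fin n) :
    wDb i (fun z => conj (z j)) z = if j = i then 1 else 0 := by
  have hd : HasFDerivAt (fun z : Fin n → ℂ => conj (z j))
      ((conjCLE : ℂ →L[ℝ] ℂ).comp (ContinuousLinearMap.proj j)) z :=
    ((conjCLE : ℂ →L[ℝ] ℂ).comp
      (ContinuousLinearMap.proj j : (Fin n → ℂ) →L[ℝ] ℂ)).hasFDerivAt
  rw [wDb, hd.fderiv]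
  by_cases h : j = i
  · subst h; norm_num
  · simp [h]

theorem wDb_mul_conj_apply (j : Fin n) :
    wDb i (fun z => z j * conj (z j)) z = if j = i then z i else 0 := by
  have hconj : DifferentiableAt ℝ (fun z : Fin n → ℂ => conj (z j)) z := by fun_prop
  rw [wDb_mul_s11 (differentiableAt_apply j z) hconj, wDb_apply, wDb_conj_apply]
  split_ifs with h <;> simp [h]

theorem wDb_sum_mul_mul_conj (c : Fin n → ℂ) :
    wDb i (fun z => ∑ j, c j * (z j * conj (z j))) z = c i * z i := by
  have hd : ∀ j : Fin n, Differentiable ℝ fun z : Fin n → ℂ => z j * conj (z j) := by fun_prop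
  rw [wDb_sum _ fun j _ => ((hd j).const_mul (c j)) z]
  simp only [wDb_const_mul (hd _ z), wDb_mul_conj_apply, mul_ite, mul_zero,
    Finset.sum_ite_eq', Finset.mem_univ, if_true]

end Wirtinger

section Model

variable {n : ℕ} (q : ℕ)

noncomputable def conjFirst : (Fin n → ℂ) →L[ℝ] (Fin n → ℂ) :=
  ContinuousLinearMap.pi fun i =>
    if (i : ℕ) < q then (conjCLE : ℂ →L[ℝ] ℂ).comp (ContinuousLinearMap.proj i)
    else ContinuousLinearMap.proj i

theorem conjFirst_apply (z : Fin n → ℂ) (i : Fin n) :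
    conjFirst q z i = if (i : ℕ) < q then conj (z i) else z i := by
  unfold conjFirst
  by_cases h : (i : ℕ) < q <;> simp [h]

theorem conjFirst_conjFirst (z : Fin n → ℂ) : conjFirst q (conjFirst q z) = z := by
  ext i
  simp only [conjFirst_apply]
  split_ifs <;> simp

theorem conjFirst_single (i : Fin n) (c : ℂ) :
    conjFirst q (Pi.single i c) = Pi.single i (if (i : ℕ) < q then conj c else c) := by
  ext j
  rcases eq_or_ne j i with rfl | h
  · simp [conjFirst_apply]
  · simp [conjFirst_apply, h]

theorem wDb_comp_conjFirst {f : (Fin n → ℂ) → ℂ} {z : Fin n → ℂ}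
    (hf : DifferentiableAt ℝ f (conjFirst q z)) (i : Fin n) :
    wDb i (fun z => f (conjFirst q z)) z =
      if (i : ℕ) < q then wD i f (conjFirst q z) else wDb i f (conjFirst q z) := by
  rw [wDb, fderiv_fun_comp z hf (conjFirst q).differentiableAt, (conjFirst q).fderiv]
  simp only [ContinuousLinearMap.comp_apply, conjFirst_single]
  split_ifs
  · simp only [map_one, conj_I, Pi.single_neg, map_neg, wD]
    ring
  · rfl

noncomputable def modelWeight (lam : Fin n → ℝ) (z : Fin n → ℂ) : ℂ :=
  ∑ j : Fin n, ((if (j : ℕ) < q then -lam j else lam j : ℝ) : ℂ) * (z j * conj (z j))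

theorem ofReal_sum_mul_norm_sq (lam : Fin n → ℝ) (z : Fin n → ℂ) :
    ((∑ j : Fin n, (if (j : ℕ) < q then -lam j else lam j) * ‖z j‖ ^ 2 : ℝ) : ℂ) =
      modelWeight q lam z := by
  simp only [modelWeight, mul_conj, Complex.sq_norm]
  push_cast
  rfl

theorem differentiable_modelWeight (lam : Fin n → ℝ) : Differentiable ℝ (modelWeight q lam) := by
  unfold modelWeight
  fun_prop

theorem wDb_modelWeight (lam : Fin n → ℝ) (z : Fin n → ℂ) (i : Fin n) :
    wDb i (modelWeight q lam) z = ((if (i : ℕ) < q then -lam i else lam i : ℝ) : ℂ) * z i :=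
  wDb_sum_mul_mul_conj _

theorem wDb_twist {f : (Fin n → ℂ) → ℂ} (hf : Differentiable ℝ f) (lam : Fin n → ℝ)
    (z : Fin n → ℂ) (i : Fin n) :
    wDb i (fun z => f (conjFirst q z) * exp (modelWeight q lam z)) z =
      exp (modelWeight q lam z) *
        if (i : ℕ) < q then
          wD i f (conjFirst q z) - lam i * conj (conjFirst q z i) * f (conjFirst q z)
        else wDb i f (conjFirst q z) + lam i * conjFirst q z i * f (conjFirst q z) := by
  have hw := differentiable_modelWeight q lam z
  rw [wDb_mul_s11 (F := fun z => f (conjFirst q z)) ((hf _).comp z (conjFirst q).differentiableAt)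
    hw.cexp, wDb_cexp hw, wDb_modelWeight, wDb_comp_conjFirst q (hf _)]
  split_ifs with h <;> simp only [conjFirst_apply, h, if_true, if_false, conj_conj] <;>
    push_cast <;> ring

end Model

theorem stmt_11_general (n q : ℕ) (lam : Fin n → ℝ)
    (f : (Fin n → ℂ) → ℂ) (hf : ContDiff ℝ (⊤ : ℕ∞) f) :
    ((∀ (z : Fin n → ℂ) (i : Fin n),
        ((i : ℕ) < q → wD i f z - (lam i : ℂ) * (starRingEnd ℂ) (z i) * f z = 0) ∧
        (q ≤ (i : ℕ) → wDb i f z + (lam i : ℂ) * z i * f z = 0))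
      ↔ Differentiable ℂ (fun z : Fin n → ℂ =>
          f (fun i => if (i : ℕ) < q then (starRingEnd ℂ) (z i) else z i) *
            Complex.exp
              ((∑ i : Fin n, (if (i : ℕ) < q then -(lam i) else lam i) * ‖z i‖ ^ 2 : ℝ)
                : ℂ))) := by
  have hdf : Differentiable ℝ f := hf.differentiable (by simp)
  have hσ (z : Fin n → ℂ) :
      (fun i : Fin n => if (i : ℕ) < q then conj (z i) else z i) = conjFirst q z :=
    funext fun i => (conjFirst_apply q z i).symm
  simp only [hσ, ofReal_sum_mul_norm_sq]
  constructor
  · intro H z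
    have hF := ((hdf _).comp z (conjFirst q).differentiableAt).mul
      (differentiable_modelWeight q lam z).cexp
    refine differentiableAt_of_wDb_eq_zero hF fun i => ?_
    obtain ⟨hlt, hge⟩ := H (conjFirst q z) i
    rw [wDb_twist q hdf, mul_eq_zero]
    right
    split_ifs with hi
    exacts [hlt hi, hge (not_lt.1 hi)]
  · intro H z i
    have h := wDb_eq_zero_of_differentiableAt (i := i) (H (conjFirst q z))
    rw [wDb_twist q hdf, conjFirst_conjFirst, mul_eq_zero, or_iff_right (exp_ne_zero _)] at h
    exact ⟨fun hi => by rwa [if_pos hi] at h, fun hi => by rwa [if_neg (not_lt.2 hi)] at h⟩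

/-- a smooth `f : ℂⁿ → ℂ` satisfies
`∂f/∂zⁱ − λᵢ z̄ⁱ f = 0` for `i ≤ q` and `∂f/∂z̄ⁱ + λᵢ zⁱ f = 0` for `i > q`
if and only if
`F(z) := f(z̄¹,…,z̄^q, z^{q+1},…,zⁿ) · e^{−Σ_{i≤q} λᵢ|zⁱ|² + Σ_{i>q} λᵢ|zⁱ|²}`
is holomorphic on `ℂⁿ`. -/
theorem stmt_11 (n q : ℕ) (hq : q ≤ n) (lam : Fin n → ℝ)
    (f : (Fin n → ℂ) → ℂ) (hf : ContDiff ℝ (⊤ : ℕ∞) f) :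
    ((∀ (z : Fin n → ℂ) (i : Fin n),
        ((i : ℕ) < q → wD i f z - (lam i : ℂ) * (starRingEnd ℂ) (z i) * f z = 0) ∧
        (q ≤ (i : ℕ) → wDb i f z + (lam i : ℂ) * z i * f z = 0))
      ↔ Differentiable ℂ (fun z : Fin n → ℂ =>
          f (fun i => if (i : ℕ) < q then (starRingEnd ℂ) (z i) else z i) *
            Complex.exp
              ((∑ i : Fin n, (if (i : ℕ) < q then -(lam i) else lam i) * ‖z i‖ ^ 2 : ℝ)
                : ℂ))) :=
  stmt_11_general n q lam f hf
end

section
/- If some λᵢ appearing in the model has the 'wrong sign' for degree q — i.e. it is NOT the case that λᵢ < 0 for all i ≤ q and λᵢ > 0 for all i > q — then any f ∈ C^∞(ℂⁿ) ∩ L²(ℂⁿ) solving the system ∂f/∂zⁱ = λᵢ\bar{z}ⁱf (i ≤ q), ∂f/∂\bar{z}ⁱ = −λᵢzⁱf (i > q) must vanish identically. Equivalently, Ker □^{(q)}_{0,s} = {0} when p ∉ M(q). -/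
open MeasureTheory

/-!
A coefficient of the wrong sign (`λᵢ ≥ 0` with `i < q`, or `λᵢ ≤ 0` with `i ≥ q`) makes
`g = f̄`, resp. `g = f`, solve `∂g/∂z̄ⁱ = μ zⁱ g` with `μ ≥ 0`. On each complex line in the direction `i`,
`G(w) = g(w) e^{-μ|w|²}` is then entire, and `|G| ≤ |g|`. By Fubini almost every such line
carries an `L²` slice of `g`; an entire function in `L²(ℂ)` vanishes, because by the
sub-mean-value property `2π|G(c)|² ≤ ∫_{|w-c|=r} |G|² dθ` for every `r`, so in polar coordinates
`∫ |G|² ≥ 2π|G(c)|² ∫₀^∞ r dr`. Hence `g = 0` almost everywhere, and everywhere by continuity.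
-/

open Complex Set Real ComplexConjugate

theorem Differentiable.two_pi_mul_sq_norm_le_lintegral_circleMap {G : ℂ → ℂ}
    (hG : Differentiable ℂ G) (c : ℂ) (r : ℝ) :
    ENNReal.ofReal (2 * π * ‖G c‖ ^ 2) ≤
      ∫⁻ θ in Ioo (-π) π, ENNReal.ofReal (‖G (circleMap c r θ)‖ ^ 2) := by
  have hmean : circleAverage (fun z => G z ^ 2) c r = G c ^ 2 :=
    (hG.pow 2).diffContOnCl.circleAverage
  have hcont : Continuous fun θ => ‖G (circleMap c r θ)‖ ^ 2 :=
    (hG.continuous.comp (continuous_circleMap c r)).norm.pow 2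
  have hshift : ∫ θ in 0..2 * π, ‖G (circleMap c r θ)‖ ^ 2 =
      ∫ θ in -π..π, ‖G (circleMap c r θ)‖ ^ 2 := by
    have hper : Function.Periodic (fun θ => ‖G (circleMap c r θ)‖ ^ 2) (2 * π) := fun θ => by
      simp [periodic_circleMap c r θ]
    have := hper.intervalIntegral_add_eq (-π) 0
    rwa [zero_add, show -π + 2 * π = π by ring, eq_comm] at this
  calc ENNReal.ofReal (2 * π * ‖G c‖ ^ 2)
      = ENNReal.ofReal ‖∫ θ in 0..2 * π, G (circleMap c r θ) ^ 2‖ := by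
        rw [← norm_pow, ← hmean, circleAverage_def, norm_smul, norm_inv, ← mul_assoc,
          Real.norm_of_nonneg two_pi_pos.le, mul_inv_cancel₀ two_pi_pos.ne', one_mul]
    _ ≤ ENNReal.ofReal (∫ θ in 0..2 * π, ‖G (circleMap c r θ)‖ ^ 2) := by
        gcongr
        refine (intervalIntegral.norm_integral_le_integral_norm two_pi_pos.le).trans_eq ?_
        simp_rw [norm_pow]
    _ = ∫⁻ θ in Ioo (-π) π, ENNReal.ofReal (‖G (circleMap c r θ)‖ ^ 2) := by
        rw [hshift, intervalIntegral.integral_of_le (by linarith [pi_pos]),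
          ofReal_integral_eq_lintegral_ofReal hcont.integrableOn_Ioc
            (ae_of_all _ fun θ => by positivity), setLIntegral_congr Ioo_ae_eq_Ioc]

theorem add_polarCoord_symm_eq_circleMap (c : ℂ) (p : ℝ × ℝ) :
    c + Complex.polarCoord.symm p = circleMap c p.1 p.2 := by
  simp [circleMap, Complex.exp_mul_I, ← ofReal_cos, ← ofReal_sin]

theorem Differentiable.eq_zero_of_integrable_sq_norm {G : ℂ → ℂ} (hG : Differentiable ℂ G)
    (hint : Integrable (fun z => ‖G z‖ ^ 2)) : G = 0 := by
  funext c
  rw [Pi.zero_apply]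
  by_contra hc
  set C := ENNReal.ofReal (2 * π * ‖G c‖ ^ 2)
  have hC : C ≠ 0 := by simp [C, hc, pi_pos, norm_pos_iff]
  have hmeas : Measurable fun p : ℝ × ℝ =>
      ENNReal.ofReal p.1 • ENNReal.ofReal (‖G (circleMap c p.1 p.2)‖ ^ 2) := by
    have : Continuous fun p : ℝ × ℝ => circleMap c p.1 p.2 := by
      simp only [circleMap]; fun_prop
    exact measurable_fst.ennreal_ofReal.smul
      ((hG.continuous.comp this).norm.pow 2).measurable.ennreal_ofReal
  have htop : ∫⁻ z, ENNReal.ofReal (‖G (c + z)‖ ^ 2) = ⊤ := by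
    rw [← Complex.lintegral_comp_polarCoord_symm, polarCoord_target]
    simp_rw [add_polarCoord_symm_eq_circleMap]
    rw [Measure.volume_eq_prod, ← Measure.prod_restrict, lintegral_prod _ hmeas.aemeasurable,
      eq_top_iff]
    calc ⊤ = ∫⁻ _ in Ioi (1 : ℝ), C := by
          rw [setLIntegral_const, Real.volume_Ioi, ENNReal.mul_top hC]
      _ ≤ ∫⁻ r in Ioi (1 : ℝ), ∫⁻ θ in Ioo (-π) π,
            ENNReal.ofReal r • ENNReal.ofReal (‖G (circleMap c r θ)‖ ^ 2) := by
        refine setLIntegral_mono' measurableSet_Ioi fun r hr => ?_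
        simp_rw [smul_eq_mul]
        rw [lintegral_const_mul' _ _ ENNReal.ofReal_ne_top]
        calc C = 1 * C := (one_mul C).symm
          _ ≤ _ := by
            gcongr
            · exact ENNReal.one_le_ofReal.mpr (le_of_lt hr)
            · exact hG.two_pi_mul_sq_norm_le_lintegral_circleMap c r
      _ ≤ _ := lintegral_mono_set (Ioi_subset_Ioi zero_le_one)
  have hfin : ∫⁻ z, ENNReal.ofReal (‖G (c + z)‖ ^ 2) < ⊤ :=
    (lintegral_add_left_eq_self (fun z => ENNReal.ofReal (‖G z‖ ^ 2)) c).trans_lt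
      hint.lintegral_lt_top
  exact hfin.ne htop

theorem differentiable_mul_cexp_neg_mul_mul_conj {μ : ℂ} {h : ℂ → ℂ} (hd : Differentiable ℝ h)
    (hdbar : ∀ w, fderiv ℝ h w 1 + I * fderiv ℝ h w I = 2 * μ * w * h w) :
    Differentiable ℂ fun w => h w * cexp (-μ * (w * conj w)) := by
  intro w
  set E := fun z : ℂ => cexp (-μ * (z * conj z))
  have hconj : HasFDerivAt (fun z : ℂ => conj z) conjCLE.toContinuousLinearMap w :=
    conjCLE.hasFDerivAt
  have hE : HasFDerivAt E (E w • -μ • (w • conjCLE.toContinuousLinearMap +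
      conj w • ContinuousLinearMap.id ℝ ℂ)) w :=
    (((hasFDerivAt_id w).mul hconj).const_mul (-μ)).cexp
  have hG : HasFDerivAt (fun z => h z * E z) _ w := (hd w).hasFDerivAt.mul hE
  refine differentiableAt_complex_iff_differentiableAt_real.mpr ⟨hG.differentiableAt, ?_⟩
  rw [hG.fderiv]
  simp only [smul_add, neg_smul, smul_neg, add_apply,
    neg_apply, smul_apply, ContinuousLinearEquiv.coe_coe,
    ContinuousAlgEquiv.coeCLE_apply, conjCAE_apply, conj_I, smul_eq_mul, mul_neg, neg_neg,
    ContinuousLinearMap.id_apply, map_one, mul_one]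
  linear_combination (-I) * E w * hdbar w + E w * fderiv ℝ h w I * I_sq

theorem eq_zero_of_integrable_sq_norm_of_dbar_eq {μ : ℝ} (hμ : 0 ≤ μ) {h : ℂ → ℂ}
    (hd : Differentiable ℝ h)
    (hdbar : ∀ w, fderiv ℝ h w 1 + I * fderiv ℝ h w I = 2 * μ * w * h w)
    (hint : Integrable fun w => ‖h w‖ ^ 2) : h = 0 := by
  have hG := differentiable_mul_cexp_neg_mul_mul_conj hd hdbar
  have hE : ∀ w : ℂ, ‖cexp (-μ * (w * conj w))‖ ≤ 1 := fun w => by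
    rw [mul_conj, ← ofReal_neg, ← ofReal_mul, norm_exp_ofReal, exp_le_one_iff]
    exact mul_nonpos_of_nonpos_of_nonneg (neg_nonpos.mpr hμ) (normSq_nonneg w)
  have hGint : Integrable fun w => ‖h w * cexp (-μ * (w * conj w))‖ ^ 2 := by
    refine hint.mono' (hG.continuous.norm.pow 2).aestronglyMeasurable (ae_of_all _ fun w => ?_)
    rw [Real.norm_of_nonneg (by positivity), norm_mul]
    gcongr
    exact mul_le_of_le_one_right (norm_nonneg _) (hE w)
  funext w
  simpa [Complex.exp_ne_zero] using congrFun (hG.eq_zero_of_integrable_sq_norm hGint) w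

theorem eq_zero_of_forall_sq_integrable_slice_eq_zero {m : ℕ} {E : Type*} [NormedAddCommGroup E]
    {F : (Fin (m + 1) → ℂ) → E} (hF : Continuous F) (hL2 : MemLp F 2) (i : Fin (m + 1))
    (hslice : ∀ y, Integrable (fun w => ‖F (i.insertNth w y)‖ ^ 2) →
      ∀ w, F (i.insertNth w y) = 0) :
    F = 0 := by
  let e := MeasurableEquiv.piFinSuccAbove (fun _ => ℂ) i
  have he : MeasurePreserving e := volume_preserving_piFinSuccAbove (fun _ => ℂ) i
  have hs : MeasurableSet {p : ℂ × (Fin m → ℂ) | F (e.symm p) = 0} :=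
    e.symm.measurable (isClosed_eq hF continuous_const).measurableSet
  have hint : Integrable (fun p => ‖F (e.symm p)‖ ^ 2) (volume.prod volume) :=
    (he.symm e).integrable_comp_emb e.symm.measurableEmbedding |>.mpr
      ((memLp_two_iff_integrable_sq_norm hF.aestronglyMeasurable).mp hL2)
  have hae : ∀ᵐ p ∂(volume.prod volume), F (e.symm p) = 0 := by
    rw [Measure.ae_prod_iff_ae_ae hs, Measure.ae_ae_comm hs]
    filter_upwards [hint.prod_left_ae] with y hy
    exact ae_of_all _ fun w => hslice y hy w
  have : F =ᵐ[volume] 0 := by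
    filter_upwards [he.quasiMeasurePreserving.ae hae] with z hz
    simpa using hz
  exact (hF.ae_eq_iff_eq volume continuous_const).mp this

theorem fderiv_comp_update_apply {𝕜 ι G : Type*} [NontriviallyNormedField 𝕜] [Fintype ι]
    [DecidableEq ι] {E : ι → Type*} [∀ i, NormedAddCommGroup (E i)] [∀ i, NormedSpace 𝕜 (E i)]
    [NormedAddCommGroup G] [NormedSpace 𝕜 G] {F : (∀ i, E i) → G} {x : ∀ i, E i} {i : ι}
    {w : E i} (hF : DifferentiableAt 𝕜 F (Function.update x i w)) (v : E i) :
    fderiv 𝕜 (fun w => F (Function.update x i w)) w v =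
      fderiv 𝕜 F (Function.update x i w) (Pi.single i v) := by
  have h := (hF.hasFDerivAt.comp w (hasFDerivAt_update x w)).fderiv
  rw [Function.comp_def] at h
  rw [h, ContinuousLinearMap.comp_apply]
  congr 1
  ext j
  rcases eq_or_ne j i with rfl | hj
  · simp
  · simp [hj]

theorem eq_zero_of_memLp_of_wDb_eq {n : ℕ} {F : (Fin n → ℂ) → ℂ} (hF : Differentiable ℝ F)
    (hL2 : MemLp F 2) (i : Fin n) {μ : ℝ} (hμ : 0 ≤ μ)
    (hdbar : ∀ z, wDb i F z = μ * z i * F z) : F = 0 := by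
  obtain ⟨m, rfl⟩ := Nat.exists_eq_add_one_of_ne_zero i.pos.ne'
  refine eq_zero_of_forall_sq_integrable_slice_eq_zero hF.continuous hL2 i fun y hy => ?_
  obtain ⟨x, hx⟩ : ∃ x, ∀ w, (i.insertNth w y : Fin (m + 1) → ℂ) = Function.update x i w :=
    ⟨_, fun w => (Fin.update_insertNth (α := fun _ => ℂ) i 0 w y).symm⟩
  simp only [hx] at hy ⊢
  rw [← funext_iff, ← Pi.zero_def]
  refine eq_zero_of_integrable_sq_norm_of_dbar_eq hμ
    (fun w => (hF _).comp w (hasFDerivAt_update (𝕜 := ℝ) x w).differentiableAt) (fun w => ?_) hy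
  rw [fderiv_comp_update_apply (hF _), fderiv_comp_update_apply (hF _)]
  have := hdbar (Function.update x i w)
  rw [wDb, Function.update_self] at this
  linear_combination 2 * this

theorem wDb_star {n : ℕ} (i : Fin n) (f : (Fin n → ℂ) → ℂ) (z : Fin n → ℂ) :
    wDb i (fun z => star (f z)) z = star (wD i f z) := by
  simp only [wDb, wD, fderiv_star, ContinuousLinearMap.comp_apply]
  simp

theorem stmt_13_general (n q : ℕ) (lam : Fin n → ℝ)
    (hsign : ¬ ((∀ i : Fin n, (i : ℕ) < q → lam i < 0) ∧
                 (∀ i : Fin n, q ≤ (i : ℕ) → 0 < lam i)))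
    (f : (Fin n → ℂ) → ℂ) (hf : ContDiff ℝ (⊤ : ℕ∞) f)
    (hL2 : MemLp f 2 (volume : Measure (Fin n → ℂ)))
    (heq1 : ∀ (z : Fin n → ℂ) (i : Fin n), (i : ℕ) < q →
      wD i f z = (lam i : ℂ) * (starRingEnd ℂ) (z i) * f z)
    (heq2 : ∀ (z : Fin n → ℂ) (i : Fin n), q ≤ (i : ℕ) →
      wDb i f z = -((lam i : ℂ)) * z i * f z) :
    ∀ z, f z = 0 := by
  have hfd : Differentiable ℝ f := hf.differentiable (by simp)
  rcases not_and_or.mp hsign with h | h <;> push Not at h <;> obtain ⟨i, hiq, hi⟩ := h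
  · have hconj := eq_zero_of_memLp_of_wDb_eq hfd.star hL2.star i hi fun z => by
      rw [wDb_star, heq1 z i hiq]
      simp
    exact fun z => by simpa using congrFun hconj z
  · have hmu : 0 ≤ -lam i := neg_nonneg.mpr hi
    exact congrFun (eq_zero_of_memLp_of_wDb_eq hfd hL2 i hmu fun z => by
      rw [heq2 z i hiq]; push_cast; ring)

/-- if it is NOT the case that `λᵢ < 0` for all `i ≤ q` and `λᵢ > 0` for all
`i > q` (all `λᵢ` nonzero), then any smooth `f ∈ L²(ℂⁿ)` solving
`∂f/∂zⁱ = λᵢ z̄ⁱ f` (`i ≤ q`), `∂f/∂z̄ⁱ = −λᵢ zⁱ f` (`i > q`) vanishes identically;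
equivalently `Ker □^{(q)}_{0,s} = {0}` when `p ∉ M(q)`. -/
theorem stmt_13 (n q : ℕ) (hq : q ≤ n) (lam : Fin n → ℝ) (hlam : ∀ i, lam i ≠ 0)
    (hsign : ¬ ((∀ i : Fin n, (i : ℕ) < q → lam i < 0) ∧
                 (∀ i : Fin n, q ≤ (i : ℕ) → 0 < lam i)))
    (f : (Fin n → ℂ) → ℂ) (hf : ContDiff ℝ (⊤ : ℕ∞) f)
    (hL2 : MemLp f 2 (volume : Measure (Fin n → ℂ)))
    (heq1 : ∀ (z : Fin n → ℂ) (i : Fin n), (i : ℕ) < q →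
      wD i f z = (lam i : ℂ) * (starRingEnd ℂ) (z i) * f z)
    (heq2 : ∀ (z : Fin n → ℂ) (i : Fin n), q ≤ (i : ℕ) →
      wDb i f z = -((lam i : ℂ)) * z i * f z) :
    ∀ z, f z = 0 :=
  stmt_13_general n q lam hsign f hf hL2 heq1 heq2
end
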